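/- Every nontrivial element of H acts on Y as a loxodromic isometry: for every g ∈ H with g ≠ 1 there exist λ ≥ 1 and c ≥ 0 such that for all integers m, n one has |m − n|/λ − c ≤ d_Y(g^m, g^n) ≤ λ·|m − n| + c; that is, the map ℤ → (F, d_Y), n ↦ g^n, is a quasi-isometric embedding. -/

import Mathlib

/-!
Let `u` be the cyclic reduction of `g`; it is a nonempty word in `a, b`. The reduced word of `g ^ N`
contains `u ^ N`, hence at least `N - 7` occurrences of `u ^ 7`. A `W`-word never contains `u ^ 7`:
such an occurrence avoids the letter `c`, so it would lie in a single `v n` or its inverse, which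
are 7-aperiodic. In a product of reduced words every factor contributes a prefix or a suffix, so
a product of `k` `W`-words has at most `k * |u ^ 7|` occurrences of `u ^ 7`, which bounds
`|g ^ N|_Y` below linearly in `N`. The upper bound holds because `|·|_Y` is a word norm: every
letter is a `W`-word, since a long `v n` must contain both `a` and `b`.
-/

open FreeGroup Filter

namespace PurelyLox

abbrev F : Type := FreeGroup (Fin 3)

def a : F := FreeGroup.of 0
def b : F := FreeGroup.of 1
def c : F := FreeGroup.of 2

/-- The subgroup generated by `a` and `b`. -/
def H : Subgroup F := Subgroup.closure {a, b}

/-- `g` is a positive word in the generators `a` and `b`. -/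
def PosAB (g : F) : Prop :=
  ∀ x ∈ g.toWord, x.2 = true ∧ x.1 ≠ 2

/-- A word is 7-aperiodic: it contains no subword `u^7` with `u` nonempty. -/
def Aperiodic7 {β : Type*} (w : List β) : Prop :=
  ¬ ∃ u : List β, u ≠ [] ∧ (List.flatten (List.replicate 7 u)) <:+: w

/-- The data of the fixed sequence `(v n)` of positive 7-aperiodic words in `a,b`,
with pairwise distinct lengths tending to infinity. -/
structure VSeq where
  v : ℕ → F
  pos : ∀ n, PosAB (v n)
  len_ne : ∀ m n, m ≠ n → ((v m).toWord.length ≠ (v n).toWord.length)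
  len_tendsto : Tendsto (fun n => (v n).toWord.length) atTop atTop
  aperiodic : ∀ n, Aperiodic7 (v n).toWord

/-- `w n = v n * c`. -/
def VSeq.w (V : VSeq) (n : ℕ) : F := V.v n * c

/-- `z` is a `W`-word: nontrivial, and its reduced word is a subword of
the reduced word of `(w n)^m` for some `n` and some `m ≠ 0`. -/
def VSeq.IsW (V : VSeq) (z : F) : Prop :=
  z ≠ 1 ∧ ∃ (n : ℕ) (m : ℤ), m ≠ 0 ∧ z.toWord <:+: ((V.w n) ^ m).toWord

/-- `|g|_Y`: the least `k` such that `g` is a product of `k` `W`-words. -/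
noncomputable def VSeq.normY (V : VSeq) (g : F) : ℕ :=
  sInf {k | ∃ l : List F, l.length = k ∧ (∀ z ∈ l, V.IsW z) ∧ l.prod = g}

/-- The vertex distance in the graph `Y`. -/
noncomputable def VSeq.dY (V : VSeq) (x y : F) : ℕ := V.normY (x⁻¹ * y)

/-- The product `u * v` is without cancellation. -/
def NoCancel (u v : F) : Prop := (u * v).toWord = u.toWord ++ v.toWord

/-- `p 0, p 1, …, p k` is a `d_Y`-geodesic from `x` to `y`. -/
def VSeq.IsGeodesic (V : VSeq) (x y : F) (k : ℕ) (p : ℕ → F) : Prop :=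
  p 0 = x ∧ p k = y ∧ (∀ i < k, V.dY (p i) (p (i + 1)) = 1) ∧ k = V.dY x y

/-- `g` is cyclically reduced. -/
def CyclicallyReduced (g : F) : Prop := (g * g).toWord = g.toWord ++ g.toWord

/-- `g` is root-free. -/
def RootFree (g : F) : Prop := ∀ (x : F) (s : ℤ), 2 ≤ |s| → g ≠ x ^ s

end PurelyLox

namespace List

variable {α : Type*}

theorem infix_of_infix_append_cons {t A B : List α} {x : α} (hx : x ∉ t)
    (h : t <:+: A ++ x :: B) : t <:+: A ∨ t <:+: B := by
  rcases infix_append_iff.1 h with hA | hxB | ⟨l₁, l₂, rfl, hl₁, hl₂⟩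
  · exact Or.inl hA
  · rcases infix_cons_iff.1 hxB with hpre | hB
    · rcases prefix_cons_iff.1 hpre with rfl | ⟨s, rfl, -⟩
      · exact Or.inl nil_infix
      · exact absurd mem_cons_self hx
    · exact Or.inr hB
  · rcases prefix_cons_iff.1 hl₂ with rfl | ⟨s, rfl, -⟩
    · exact Or.inl (by simpa using hl₁.isInfix)
    · exact absurd (by simp) hx

theorem infix_of_infix_flatten_replicate_append_singleton {t v : List α} {x : α} (hx : x ∉ t) :
    ∀ {m : ℕ}, t <:+: (replicate m (v ++ [x])).flatten → t <:+: v
  | 0, h => by simp_all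
  | m + 1, h => by
    rw [replicate_succ, flatten_cons, append_assoc, singleton_append] at h
    exact (infix_of_infix_append_cons hx h).elim id
      (infix_of_infix_flatten_replicate_append_singleton hx)

variable [DecidableEq α]

def infixCount (t w : List α) : ℕ :=
  ((Finset.range w.length).filter fun i => t <+: w.drop i).card

theorem infixCount_eq_zero_of_not_infix {t w : List α} (h : ¬ t <:+: w) : infixCount t w = 0 :=
  Finset.card_eq_zero.2 <| Finset.filter_eq_empty_iff.2 fun i _ hi =>
    h (hi.isInfix.trans (drop_suffix i w).isInfix)

theorem infixCount_le_of_infix {t x y : List α} (h : x <:+: y) :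
    infixCount t x ≤ infixCount t y := by
  obtain ⟨s, p, rfl⟩ := h
  refine Finset.card_le_card_of_injOn (s.length + ·) (fun i hi => ?_)
    (fun i _ j _ hij => Nat.add_left_cancel hij)
  simp only [Finset.coe_filter, Finset.mem_range, Set.mem_ofPred_eq] at hi ⊢
  refine ⟨by simp; omega, ?_⟩
  rw [append_assoc, drop_length_add_append, drop_append_of_le_length hi.1.le]
  exact hi.2.trans (prefix_append _ _)

theorem infixCount_append_le (t x y : List α) :
    infixCount t (x ++ y) ≤ infixCount t x + infixCount t y + t.length := by
  have hleft : ((Finset.range x.length).filter fun i => t <+: (x ++ y).drop i).card ≤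
      infixCount t x + t.length := by
    have hsub : ((Finset.range x.length).filter fun i => t <+: (x ++ y).drop i) ⊆
        ((Finset.range x.length).filter fun i => t <+: x.drop i) ∪
          Finset.Ico (x.length - t.length) x.length := by
      intro i
      simp only [Finset.mem_filter, Finset.mem_range, Finset.mem_union, Finset.mem_Ico]
      rintro ⟨hi, ht⟩
      by_cases hfit : i + t.length ≤ x.length
      · rw [drop_append_of_le_length hi.le] at ht
        exact Or.inl ⟨hi, prefix_of_prefix_length_le ht (prefix_append _ _) (by simp; omega)⟩
      · exact Or.inr ⟨by omega, hi⟩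
    refine (Finset.card_le_card hsub).trans ((Finset.card_union_le _ _).trans ?_)
    simp only [Nat.card_Ico, infixCount]
    omega
  rw [add_right_comm, infixCount, length_append, Finset.range_add, Finset.filter_union,
    Finset.filter_map]
  refine (Finset.card_union_le _ _).trans (add_le_add hleft ?_)
  simp [infixCount]

theorem le_infixCount_flatten_replicate {u : List α} (hu : u ≠ []) (k N : ℕ) :
    N ≤ infixCount (replicate k u).flatten (replicate N u).flatten + k := by
  suffices N - k ≤ infixCount (replicate k u).flatten (replicate N u).flatten by omega
  have hlen : 0 < u.length := length_pos_iff.2 hu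
  rw [← Finset.card_range (N - k)]
  refine Finset.card_le_card_of_injOn (· * u.length) (fun j hj => ?_)
    (fun i _ j _ hij => Nat.eq_of_mul_eq_mul_right hlen hij)
  simp only [Finset.coe_range, Set.mem_Iio, Finset.coe_filter, Finset.mem_range,
    Set.mem_ofPred_eq] at hj ⊢
  have hsplit : replicate N u = replicate j u ++ (replicate k u ++ replicate (N - j - k) u) := by
    simp only [replicate_append_replicate]; congr 1; omega
  refine ⟨by simpa using (Nat.mul_lt_mul_right hlen).2 (by omega : j < N), ?_⟩
  rw [hsplit, flatten_append, flatten_append, drop_left' (by simp)]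
  exact prefix_append _ _

end List

namespace FreeGroup

open List

variable {α : Type*}

theorem mem_invRev {L : List (α × Bool)} {p : α × Bool} :
    p ∈ invRev L ↔ (p.1, !p.2) ∈ L := by
  rcases p with ⟨a, b⟩
  simp [invRev]

theorem invRev_flatten_replicate (k : ℕ) (L : List (α × Bool)) :
    invRev (replicate k L).flatten = (replicate k (invRev L)).flatten := by
  simp [invRev, map_flatten, reverse_flatten, map_replicate, reverse_replicate]

theorem invRev_infix_invRev {L₁ L₂ : List (α × Bool)} (h : L₁ <:+: L₂) :
    invRev L₁ <:+: invRev L₂ :=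
  (h.map _).reverse

theorem isReduced_of_forall_snd_eq_true {L : List (α × Bool)} (h : ∀ p ∈ L, p.2 = true) :
    IsReduced L := by
  rw [IsReduced]
  exact (pairwise_of_forall_mem_list fun p hp q hq (_ : p.1 = q.1) =>
    (h p hp).trans (h q hq).symm).isChain

variable [DecidableEq α]

theorem reduce_append_eq_prefix_append_suffix :
    ∀ {L₁ L₂ : List (α × Bool)}, IsReduced L₁ → IsReduced L₂ →
      ∃ L₁' L₂', L₁' <+: L₁ ∧ L₂' <:+ L₂ ∧ reduce (L₁ ++ L₂) = L₁' ++ L₂'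
  | [], L₂, _, h₂ => ⟨[], L₂, nil_prefix, suffix_rfl, by simpa using h₂.reduce_eq⟩
  | p :: L₁, L₂, h₁, h₂ => by
    obtain ⟨L₁', L₂', hpre, hsuf, heq⟩ :=
      reduce_append_eq_prefix_append_suffix (h₁.infix (suffix_cons p L₁).isInfix) h₂
    rw [cons_append, reduce.cons, heq]
    rcases L₁' with _ | ⟨q, L₁'⟩
    · rcases L₂' with _ | ⟨r, L₂'⟩
      · exact ⟨[p], [], ⟨L₁, rfl⟩, nil_suffix, rfl⟩
      · by_cases hpr : p.1 = r.1 ∧ p.2 = !r.2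
        · exact ⟨[], L₂', nil_prefix, (suffix_cons r L₂').trans hsuf, by simp [hpr]⟩
        · exact ⟨[p], r :: L₂', ⟨L₁, rfl⟩, hsuf, by simp [hpr]⟩
    · obtain ⟨s, rfl⟩ := hpre
      have hpq : ¬ (p.1 = q.1 ∧ p.2 = !q.2) := by
        rintro ⟨h1, h2⟩
        simpa [h2] using (isReduced_cons_cons.1 (by simpa using h₁)).1 h1
      exact ⟨p :: q :: L₁', L₂', ⟨s, rfl⟩, hsuf, by simp [hpq]⟩

theorem toWord_mul_eq_prefix_append_suffix (x y : FreeGroup α) :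
    ∃ L₁ L₂, L₁ <+: x.toWord ∧ L₂ <:+ y.toWord ∧ (x * y).toWord = L₁ ++ L₂ := by
  rw [toWord_mul]
  exact reduce_append_eq_prefix_append_suffix isReduced_toWord isReduced_toWord

theorem infixCount_toWord_mul_le (t : List (α × Bool)) (x y : FreeGroup α) :
    infixCount t (x * y).toWord ≤ infixCount t x.toWord + infixCount t y.toWord + t.length := by
  obtain ⟨L₁, L₂, h₁, h₂, heq⟩ := toWord_mul_eq_prefix_append_suffix x y
  rw [heq]
  have := infixCount_le_of_infix (t := t) h₁.isInfix
  have := infixCount_le_of_infix (t := t) h₂.isInfix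
  have := infixCount_append_le t L₁ L₂
  omega

theorem infixCount_toWord_prod_le (t : List (α × Bool)) :
    ∀ l : List (FreeGroup α), (∀ z ∈ l, ¬ t <:+: z.toWord) →
      infixCount t l.prod.toWord ≤ l.length * t.length
  | [], _ => by simp [infixCount]
  | z :: l, h => by
    have hz := infixCount_eq_zero_of_not_infix (h z mem_cons_self)
    have hl := infixCount_toWord_prod_le t l fun w hw => h w (mem_cons_of_mem z hw)
    have := infixCount_toWord_mul_le t z l.prod
    rw [prod_cons, length_cons]
    nlinarith

theorem reduceCyclically_infix (L : List (α × Bool)) : reduceCyclically L <:+: L :=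
  ⟨_, _, reduceCyclically.conj_conjugator_reduceCyclically L⟩

theorem reduceCyclically_toWord_ne_nil {x : FreeGroup α} (hx : x ≠ 1) :
    reduceCyclically x.toWord ≠ [] := by
  intro h
  have hconj := reduceCyclically.conj_conjugator_reduceCyclically x.toWord
  rw [h, append_nil] at hconj
  apply hx
  rw [← mk_toWord (x := x), ← hconj, ← mul_mk, ← inv_mk, mul_inv_cancel]

theorem flatten_replicate_reduceCyclically_infix_toWord_pow (x : FreeGroup α) (N : ℕ) :
    (replicate N (reduceCyclically x.toWord)).flatten <:+: (x ^ N).toWord := by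
  rw [toWord_pow, reduceCyclically.reduce_flatten_replicate isReduced_toWord]
  split_ifs with hN
  · simp [hN]
  · exact infix_append _ _ _

def letterSubgroup (S : Set α) : Subgroup (FreeGroup α) where
  carrier := {x | ∀ p ∈ x.toWord, p.1 ∈ S}
  one_mem' := by simp
  mul_mem' {x y} hx hy p hp := by
    rcases mem_append.1 ((toWord_mul_sublist x y).subset hp) with h | h
    exacts [hx p h, hy p h]
  inv_mem' {x} hx p hp := by
    rw [toWord_inv, mem_invRev] at hp
    exact hx (p.1, !p.2) hp

theorem of_mem_letterSubgroup {S : Set α} {i : α} (hi : i ∈ S) : of i ∈ letterSubgroup S := by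
  simpa [letterSubgroup] using hi

end FreeGroup

namespace PurelyLox

open List

theorem H_le_letterSubgroup : H ≤ letterSubgroup {2}ᶜ := by
  rw [H, Subgroup.closure_le]
  rintro x (rfl | rfl) <;> exact of_mem_letterSubgroup (by decide)

namespace VSeq

variable (V : VSeq)

theorem toWord_w_pow (n k : ℕ) :
    ((V.w n) ^ k).toWord = (replicate k ((V.v n).toWord ++ [(2, true)])).flatten := by
  have hpos : ∀ p ∈ (V.v n).toWord ++ [(2, true)], p.2 = true := by
    simpa using fun p hp => (V.pos n p hp).1
  have hw : (V.w n).toWord = (V.v n).toWord ++ [(2, true)] := by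
    rw [w, toWord_mul, c, toWord_of]
    exact (isReduced_of_forall_snd_eq_true hpos).reduce_eq
  rw [toWord_pow, hw]
  refine (isReduced_of_forall_snd_eq_true fun p hp => ?_).reduce_eq
  obtain ⟨L, hL, hpL⟩ := mem_flatten.1 hp
  rw [eq_of_mem_replicate hL] at hpL
  exact hpos p hpL

theorem not_flatten_replicate_infix_toWord_w_pow {u : List (Fin 3 × Bool)} (hu : u ≠ [])
    (hc : ∀ p ∈ u, p.1 ≠ 2) (n k : ℕ) :
    ¬ (replicate 7 u).flatten <:+: ((V.w n) ^ k).toWord := by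
  intro h
  rw [toWord_w_pow] at h
  have hcu : ((2 : Fin 3), true) ∉ (replicate 7 u).flatten := by
    simp only [mem_flatten, mem_replicate]
    rintro ⟨L, ⟨-, rfl⟩, hL⟩
    exact hc _ hL rfl
  exact V.aperiodic n ⟨u, hu, infix_of_infix_flatten_replicate_append_singleton hcu h⟩

theorem IsW.inv {V : VSeq} {z : F} (hz : V.IsW z) : V.IsW z⁻¹ := by
  obtain ⟨hz1, n, m, hm, hzw⟩ := hz
  refine ⟨inv_ne_one.2 hz1, n, -m, neg_ne_zero.2 hm, ?_⟩
  rw [toWord_inv, zpow_neg, toWord_inv]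
  exact invRev_infix_invRev hzw

theorem IsW.not_flatten_replicate_infix {V : VSeq} {z : F} (hz : V.IsW z)
    {u : List (Fin 3 × Bool)} (hu : u ≠ []) (hc : ∀ p ∈ u, p.1 ≠ 2) :
    ¬ (replicate 7 u).flatten <:+: z.toWord := by
  intro h
  obtain ⟨-, n, m, -, hzw⟩ := hz
  obtain ⟨k, rfl | rfl⟩ := Int.eq_nat_or_neg m
  · rw [zpow_natCast] at hzw
    exact V.not_flatten_replicate_infix_toWord_w_pow hu hc n k (h.trans hzw)
  · rw [zpow_neg, zpow_natCast, toWord_inv] at hzw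
    have hinv := invRev_infix_invRev (h.trans hzw)
    rw [invRev_invRev, invRev_flatten_replicate] at hinv
    refine V.not_flatten_replicate_infix_toWord_w_pow ?_ ?_ n k hinv
    · simpa [← length_eq_zero_iff, invRev_length] using hu
    · intro p hp
      exact hc (p.1, !p.2) (mem_invRev.1 hp)

theorem mem_toWord_v_of_seven_le {n : ℕ} (hn : 7 ≤ (V.v n).toWord.length) {i : Fin 3}
    (hi : i ≠ 2) :
    (i, true) ∈ (V.v n).toWord := by
  by_contra hmem
  have hother : ∀ i : Fin 3, i ≠ 2 → ∃ j : Fin 3,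
      ∀ p : Fin 3 × Bool, p.2 = true → p.1 ≠ 2 → p ≠ (i, true) → p = (j, true) := by
    decide
  obtain ⟨j, hj⟩ := hother i hi
  have hrep : (V.v n).toWord = replicate (V.v n).toWord.length (j, true) :=
    eq_replicate_iff.2 ⟨rfl, fun p hp =>
      hj p (V.pos n p hp).1 (V.pos n p hp).2 fun h => hmem (h ▸ hp)⟩
  refine V.aperiodic n ⟨[(j, true)], cons_ne_nil _ _, ?_⟩
  rw [flatten_replicate_singleton, hrep]
  exact infix_replicate_iff.2 ⟨by simpa using hn, by simp⟩

theorem isW_of (i : Fin 3) : V.IsW (of i) := by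
  obtain ⟨n, hn⟩ := (V.len_tendsto.eventually_ge_atTop 7).exists
  refine ⟨of_ne_one i, n, 1, one_ne_zero, ?_⟩
  have hw := V.toWord_w_pow n 1
  rw [pow_one] at hw
  rw [zpow_one, hw, toWord_of, replicate_one, flatten_singleton]
  by_cases hi : i = 2
  · subst hi
    exact infix_append_right
  · exact ((singleton_infix_iff _ _).2 (V.mem_toWord_v_of_seven_le hn hi)).trans
      infix_append_left

theorem exists_prod_eq (g : F) : ∃ l : List F, (∀ z ∈ l, V.IsW z) ∧ l.prod = g := by
  have hg : g ∈ Subgroup.closure (Set.range of) := by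
    rw [closure_range_of]
    trivial
  induction hg using Subgroup.closure_induction with
  | mem x hx =>
    obtain ⟨i, rfl⟩ := hx
    exact ⟨[of i], by simpa using V.isW_of i, by simp⟩
  | one => exact ⟨[], by simp, rfl⟩
  | mul x y _ _ hx hy =>
    obtain ⟨l, hl, rfl⟩ := hx
    obtain ⟨l', hl', rfl⟩ := hy
    exact ⟨l ++ l', fun z hz => (mem_append.1 hz).elim (hl z) (hl' z), prod_append⟩
  | inv x _ hx =>
    obtain ⟨l, hl, rfl⟩ := hx
    refine ⟨(l.map (·⁻¹)).reverse, fun z hz => ?_, (prod_inv_reverse l).symm⟩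
    obtain ⟨w, hw, rfl⟩ := mem_map.1 (mem_reverse.1 hz)
    exact (hl w hw).inv

theorem normY_spec (g : F) :
    ∃ l : List F, l.length = V.normY g ∧ (∀ z ∈ l, V.IsW z) ∧ l.prod = g := by
  obtain ⟨l, hl, hg⟩ := V.exists_prod_eq g
  exact Nat.sInf_mem
    (s := {k | ∃ l : List F, l.length = k ∧ (∀ z ∈ l, V.IsW z) ∧ l.prod = g})
    ⟨l.length, l, rfl, hl, hg⟩

theorem normY_prod_le {l : List F} (hl : ∀ z ∈ l, V.IsW z) : V.normY l.prod ≤ l.length :=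
  Nat.sInf_le ⟨l, rfl, hl, rfl⟩

theorem normY_mul_le (x y : F) : V.normY (x * y) ≤ V.normY x + V.normY y := by
  obtain ⟨l, hlen, hl, rfl⟩ := V.normY_spec x
  obtain ⟨l', hlen', hl', rfl⟩ := V.normY_spec y
  rw [← prod_append, ← hlen, ← hlen', ← length_append]
  exact V.normY_prod_le fun z hz => (mem_append.1 hz).elim (hl z) (hl' z)

theorem normY_inv_le (g : F) : V.normY g⁻¹ ≤ V.normY g := by
  obtain ⟨l, hlen, hl, rfl⟩ := V.normY_spec g
  rw [prod_inv_reverse, ← hlen, ← length_map (·⁻¹), ← length_reverse]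
  refine V.normY_prod_le fun z hz => ?_
  obtain ⟨w, hw, rfl⟩ := mem_map.1 (mem_reverse.1 hz)
  exact (hl w hw).inv

theorem normY_inv (g : F) : V.normY g⁻¹ = V.normY g :=
  le_antisymm (V.normY_inv_le g) (by simpa using V.normY_inv_le g⁻¹)

theorem normY_pow_le (g : F) (N : ℕ) : V.normY (g ^ N) ≤ N * V.normY g := by
  induction N with
  | zero => simpa using V.normY_prod_le (l := []) (by simp)
  | succ N ih =>
    rw [pow_succ, add_one_mul]
    exact (V.normY_mul_le _ _).trans (Nat.add_le_add_right ih _)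

theorem normY_zpow_le (g : F) (N : ℤ) : V.normY (g ^ N) ≤ N.natAbs * V.normY g := by
  obtain ⟨k, rfl | rfl⟩ := Int.eq_nat_or_neg N
  · simpa using V.normY_pow_le g k
  · simpa [normY_inv] using V.normY_pow_le g k

theorem dY_zpow_zpow (g : F) (m n : ℤ) : V.dY (g ^ m) (g ^ n) = V.normY (g ^ (n - m)) := by
  rw [dY, ← zpow_neg, ← zpow_add, neg_add_eq_sub]

theorem infixCount_toWord_le_normY {t : List (Fin 3 × Bool)}
    (ht : ∀ z, V.IsW z → ¬ t <:+: z.toWord) (g : F) :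
    infixCount t g.toWord ≤ V.normY g * t.length := by
  obtain ⟨l, hlen, hl, rfl⟩ := V.normY_spec g
  rw [← hlen]
  exact infixCount_toWord_prod_le t l fun z hz => ht z (hl z hz)

theorem exists_natAbs_le_normY_zpow {g : F} (hg : g ≠ 1) (hc : ∀ p ∈ g.toWord, p.1 ≠ 2) :
    ∃ T, 1 ≤ T ∧ ∀ N : ℤ, N.natAbs ≤ V.normY (g ^ N) * T + 7 := by
  set u := reduceCyclically g.toWord
  have hu : u ≠ [] := reduceCyclically_toWord_ne_nil hg
  have huc : ∀ p ∈ u, p.1 ≠ 2 := fun p hp => hc p ((reduceCyclically_infix _).subset hp)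
  have hnat (N : ℕ) : N ≤ V.normY (g ^ N) * (replicate 7 u).flatten.length + 7 :=
    calc N ≤ infixCount (replicate 7 u).flatten (replicate N u).flatten + 7 :=
          le_infixCount_flatten_replicate hu 7 N
      _ ≤ infixCount (replicate 7 u).flatten (g ^ N).toWord + 7 := by
          gcongr
          exact infixCount_le_of_infix (flatten_replicate_reduceCyclically_infix_toWord_pow g N)
      _ ≤ V.normY (g ^ N) * (replicate 7 u).flatten.length + 7 := by
          gcongr
          exact V.infixCount_toWord_le_normY (fun z hz => hz.not_flatten_replicate_infix hu huc) _
  refine ⟨(replicate 7 u).flatten.length, ?_, fun N => ?_⟩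
  · have := length_pos_iff.2 hu
    simp only [length_flatten, map_replicate, sum_replicate, smul_eq_mul]
    omega
  · obtain ⟨k, rfl | rfl⟩ := Int.eq_nat_or_neg N
    · simpa using hnat k
    · simpa [normY_inv] using hnat k

end VSeq

theorem exists_quasiIsometry_bounds (D : ℤ → ℕ) {L T C : ℕ} (hT : 1 ≤ T)
    (hlow : ∀ N, N.natAbs ≤ D N * T + C) (hup : ∀ N, D N ≤ N.natAbs * L) :
    ∃ lam c : ℝ, 1 ≤ lam ∧ 0 ≤ c ∧
      ∀ N : ℤ, |(N : ℝ)| / lam - c ≤ D N ∧ (D N : ℝ) ≤ lam * |(N : ℝ)| + c := by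
  have hT' : (1 : ℝ) ≤ T := by exact_mod_cast hT
  have hL : (0 : ℝ) ≤ L := L.cast_nonneg
  refine ⟨L + T, C, by linarith, C.cast_nonneg, fun N => ⟨?_, ?_⟩⟩
  · have hN : |(N : ℝ)| ≤ D N * T + C := by
      rw [← Int.cast_abs, ← Int.natCast_natAbs]
      exact_mod_cast hlow N
    rw [sub_le_iff_le_add, div_le_iff₀ (by linarith)]
    have hD : (0 : ℝ) ≤ D N := (D N).cast_nonneg
    nlinarith [C.cast_nonneg (α := ℝ)]
  · have hN : (D N : ℝ) ≤ |(N : ℝ)| * L := by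
      rw [← Int.cast_abs, ← Int.natCast_natAbs]
      exact_mod_cast hup N
    nlinarith [abs_nonneg (N : ℝ), C.cast_nonneg (α := ℝ)]

/-- Every nontrivial element of `H` acts loxodromically on `Y`:
the map `n ↦ g^n` is a quasi-isometric embedding of `ℤ` into `(F, d_Y)`. -/
theorem stmt2 (V : VSeq) :
    ∀ g : F, g ∈ H → g ≠ 1 →
      ∃ lam c : ℝ, 1 ≤ lam ∧ 0 ≤ c ∧
        ∀ m n : ℤ,
          |(m : ℝ) - (n : ℝ)| / lam - c ≤ (V.dY (g ^ m) (g ^ n) : ℝ) ∧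
          (V.dY (g ^ m) (g ^ n) : ℝ) ≤ lam * |(m : ℝ) - (n : ℝ)| + c := by
  intro g hgH hg1
  obtain ⟨T, hT, hlow⟩ := V.exists_natAbs_le_normY_zpow hg1 (H_le_letterSubgroup hgH)
  obtain ⟨lam, c, hlam, hc, hbounds⟩ :=
    exists_quasiIsometry_bounds (fun N => V.normY (g ^ N)) hT hlow (V.normY_zpow_le g)
  refine ⟨lam, c, hlam, hc, fun m n => ?_⟩
  rw [V.dY_zpow_zpow, abs_sub_comm, ← Int.cast_sub]
  exact hbounds (n - m)

end PurelyLox
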